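/- arXiv:2404.14607 — 3 statements merged into one kernel-verified Lean document; each statement's English description precedes it below -/
import Mathlib

section
/- Let P and Q be probability measures on a measurable space Ω and set m := (1/2)·(P + Q). Then for every measurable function F : Ω → ℝ such that x ↦ log(1 + exp(−F(x))) is P-integrable and x ↦ log(1 + exp(F(x))) is Q-integrable, one has KL(P ‖ m) + KL(Q ‖ m) ≥ 2·log 2 − ∫ log(1 + exp(−F)) dP − ∫ log(1 + exp(F)) dQ. -/
open MeasureTheory Real
open scoped ENNReal Classical

/-!
Apply the Donsker–Varadhan bound `∫ f dμ - log ∫ exp f dν ≤ KL(μ ‖ ν)` to `(P, m)` with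
`f = -log (1 + exp (-F))` and to `(Q, m)` with `f = -log (1 + exp F)`. The two exponential
moments `a = ∫ (1 + exp (-F))⁻¹ dm` and `b = ∫ (1 + exp F)⁻¹ dm` satisfy `a + b = 1`, so
`-log a - log b ≥ 2 log 2` by AM–GM.
-/

noncomputable def klDiv {Ω : Type*} [MeasurableSpace Ω] (P Q : Measure Ω) : EReal :=
  if P ≪ Q ∧ Integrable (fun x => Real.log (P.rnDeriv Q x).toReal) P
  then ((∫ x, Real.log (P.rnDeriv Q x).toReal ∂P : ℝ) : EReal)
  else ⊤

namespace Real

theorem exp_neg_log_one_add_exp (t : ℝ) : exp (-log (1 + exp t)) = (1 + exp t)⁻¹ := by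
  rw [exp_neg, exp_log (by positivity)]

theorem inv_one_add_exp_neg_add_inv_one_add_exp (t : ℝ) :
    (1 + exp (-t))⁻¹ + (1 + exp t)⁻¹ = 1 := by
  rw [exp_neg]
  field_simp
  ring

theorem two_mul_log_two_le_neg_log_sub_log {a b : ℝ} (ha : 0 < a) (hb : 0 < b) (hab : a + b = 1) :
    2 * log 2 ≤ -log a - log b := by
  have hla := log_le_sub_one_of_pos (mul_pos two_pos ha)
  have hlb := log_le_sub_one_of_pos (mul_pos two_pos hb)
  rw [log_mul two_ne_zero ha.ne'] at hla
  rw [log_mul two_ne_zero hb.ne'] at hlb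
  linarith

end Real

namespace MeasureTheory

variable {Ω : Type*} [MeasurableSpace Ω] {μ ν : Measure Ω}

theorem integral_sub_log_integral_exp_le_integral_llr [IsProbabilityMeasure μ] [SigmaFinite ν]
    {f : Ω → ℝ} (hμν : μ ≪ ν) (h_int : Integrable (llr μ ν) μ) (hfμ : Integrable f μ)
    (hfν : Integrable (fun x ↦ exp (f x)) ν) :
    ∫ x, f x ∂μ - log (∫ x, exp (f x) ∂ν) ≤ ∫ x, llr μ ν x ∂μ := by
  have : NeZero ν := ⟨by
    rintro rfl
    exact IsProbabilityMeasure.ne_zero μ (Measure.absolutelyContinuous_zero_iff.mp hμν)⟩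
  have := isProbabilityMeasure_tilted hfν
  -- Gibbs' inequality for `μ` against the tilted measure `ν.tilted f`.
  have h := InformationTheory.integral_llr_add_sub_measure_univ_nonneg
    (hμν.trans (absolutelyContinuous_tilted hfν)) (integrable_llr_tilted_right hμν hfμ h_int hfν)
  rw [integral_llr_tilted_right hμν hfμ hfν h_int] at h
  simp only [probReal_univ] at h
  linarith

theorem integrable_inv_one_add_exp [IsFiniteMeasure μ] {G : Ω → ℝ} (hG : Measurable G) :
    Integrable (fun x ↦ (1 + exp (G x))⁻¹) μ := by
  refine .of_bound (by fun_prop) 1 (.of_forall fun x ↦ ?_)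
  rw [norm_inv, Real.norm_of_nonneg (by positivity)]
  exact inv_le_one_of_one_le₀ (by linarith [exp_pos (G x)])

theorem integral_inv_one_add_exp_pos [IsFiniteMeasure μ] [NeZero μ] {G : Ω → ℝ}
    (hG : Measurable G) : 0 < ∫ x, (1 + exp (G x))⁻¹ ∂μ := by
  simpa only [exp_neg_log_one_add_exp] using
    integral_exp_pos (f := fun x ↦ -log (1 + exp (G x))) (μ := μ)
      (by simpa only [exp_neg_log_one_add_exp] using integrable_inv_one_add_exp hG)

end MeasureTheory

section KullbackLeibler

open MeasureTheory

variable {Ω : Type*} [MeasurableSpace Ω] {μ ν : Measure Ω}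

theorem integral_sub_log_integral_exp_le_klDiv [IsProbabilityMeasure μ] [SigmaFinite ν]
    {f : Ω → ℝ} (hμν : μ ≪ ν) (hfμ : Integrable f μ) (hfν : Integrable (fun x ↦ exp (f x)) ν) :
    ((∫ x, f x ∂μ - log (∫ x, exp (f x) ∂ν) : ℝ) : EReal) ≤ klDiv μ ν := by
  rw [klDiv]
  split_ifs with h
  · exact_mod_cast integral_sub_log_integral_exp_le_integral_llr hμν h.2 hfμ hfν
  · exact le_top

theorem neg_integral_log_one_add_exp_sub_log_le_klDiv [IsProbabilityMeasure μ]
    [IsFiniteMeasure ν] {G : Ω → ℝ} (hG : Measurable G) (hμν : μ ≪ ν)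
    (hGμ : Integrable (fun x ↦ log (1 + exp (G x))) μ) :
    ((-∫ x, log (1 + exp (G x)) ∂μ - log (∫ x, (1 + exp (G x))⁻¹ ∂ν) : ℝ) : EReal)
      ≤ klDiv μ ν := by
  simpa only [exp_neg_log_one_add_exp, integral_neg] using
    integral_sub_log_integral_exp_le_klDiv (f := fun x ↦ -log (1 + exp (G x))) hμν hGμ.neg
      (by simpa only [exp_neg_log_one_add_exp] using integrable_inv_one_add_exp (μ := ν) hG)

end KullbackLeibler

theorem stmt_1 {Ω : Type*} [MeasurableSpace Ω] (P Q : Measure Ω)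
    [IsProbabilityMeasure P] [IsProbabilityMeasure Q]
    (m : Measure Ω) (hm : m = (1 / 2 : ℝ≥0∞) • (P + Q))
    (F : Ω → ℝ) (hF : Measurable F)
    (hFP : Integrable (fun x => Real.log (1 + Real.exp (-F x))) P)
    (hFQ : Integrable (fun x => Real.log (1 + Real.exp (F x))) Q) :
    ((2 * Real.log 2 - ∫ x, Real.log (1 + Real.exp (-F x)) ∂P
        - ∫ x, Real.log (1 + Real.exp (F x)) ∂Q : ℝ) : EReal)
      ≤ klDiv P m + klDiv Q m := by
  have : IsProbabilityMeasure m := by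
    rw [hm]
    constructor
    simp [ENNReal.inv_two_add_inv_two]
  have h_half : (1 / 2 : ℝ≥0∞) ≠ 0 := by norm_num
  have hPm : P ≪ m := hm ▸
    (Measure.AbsolutelyContinuous.rfl.add_right Q).trans (Measure.absolutelyContinuous_smul h_half)
  have hQm : Q ≪ m := hm ▸
    (Measure.AbsolutelyContinuous.rfl.add_right' P).trans (Measure.absolutelyContinuous_smul h_half)
  have hP := neg_integral_log_one_add_exp_sub_log_le_klDiv (G := fun x ↦ -F x) hF.neg hPm hFP
  have hQ := neg_integral_log_one_add_exp_sub_log_le_klDiv hF hQm hFQ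
  have h_sum : ∫ x, (1 + exp (-F x))⁻¹ ∂m + ∫ x, (1 + exp (F x))⁻¹ ∂m = 1 := by
    rw [← integral_add (integrable_inv_one_add_exp (G := fun x ↦ -F x) hF.neg)
      (integrable_inv_one_add_exp hF)]
    simp [inv_one_add_exp_neg_add_inv_one_add_exp]
  have h_log := two_mul_log_two_le_neg_log_sub_log
    (integral_inv_one_add_exp_pos (G := fun x ↦ -F x) hF.neg) (integral_inv_one_add_exp_pos hF) h_sum
  refine le_trans ?_ (add_le_add hP hQ)
  rw [← EReal.coe_add, EReal.coe_le_coe_iff]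
  linarith
end

section
/- Let P and Q be probability measures on a measurable space Ω and set m := (1/2)·(P + Q). Then KL(P ‖ m) + KL(Q ‖ m) equals the supremum, over all bounded measurable functions F : Ω → ℝ, of the quantity 2·log 2 − ∫ log(1 + exp(−F)) dP − ∫ log(1 + exp(F)) dQ. -/
open MeasureTheory Real
open scoped ENNReal Classical

lemma js_mul_log_sub (x y : ℝ) (hx : 0 ≤ x) (hy : 0 < y) :
    x - y ≤ x * Real.log x - x * Real.log y := by
  rcases eq_or_lt_of_le hx with h0 | h0
  · simp [← h0]; linarith
  · have h := Real.log_le_sub_one_of_pos (div_pos hy h0)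
    rw [Real.log_div hy.ne' h0.ne'] at h
    have := mul_le_mul_of_nonneg_left h h0.le
    have hxy : x * (y / x) = y := by field_simp
    nlinarith

lemma js_pointwise (a b t : ℝ) (ha : 0 ≤ a) (hb : 0 ≤ b) (hab : a + b = 2) :
    a * (Real.log 2 - Real.log (1 + Real.exp (-t))) + b * (Real.log 2 - Real.log (1 + Real.exp t))
      ≤ a * Real.log a + b * Real.log b := by
  set u : ℝ := 1 + Real.exp (-t) with hu
  set v : ℝ := 1 + Real.exp t with hv
  have hu0 : 0 < u := by positivity
  have hv0 : 0 < v := by positivity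
  have hsum : 2 / u + 2 / v = 2 := by
    rw [div_add_div _ _ hu0.ne' hv0.ne', div_eq_iff (by positivity)]
    have he : Real.exp t * Real.exp (-t) = 1 := by
      rw [← Real.exp_add]; simp
    ring_nf
    nlinarith [Real.exp_pos t, Real.exp_pos (-t)]
  have h1 := js_mul_log_sub a (2 / u) ha (by positivity)
  have h2 := js_mul_log_sub b (2 / v) hb (by positivity)
  have e1 : Real.log (2 / u) = Real.log 2 - Real.log u := Real.log_div two_ne_zero hu0.ne'
  have e2 : Real.log (2 / v) = Real.log 2 - Real.log v := Real.log_div two_ne_zero hv0.ne'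
  rw [e1] at h1
  rw [e2] at h2
  nlinarith

lemma js_abs_mul_log_le {x : ℝ} (h0 : 0 ≤ x) (h2 : x ≤ 2) : |x * Real.log x| ≤ 2 := by
  rcases eq_or_lt_of_le h0 with h | h
  · simp [← h]
  rcases le_or_gt x 1 with hx1 | hx1
  · have hlog : Real.log x ≤ 0 := Real.log_nonpos h0 hx1
    have h' := Real.log_le_sub_one_of_pos (show (0:ℝ) < 1/x by positivity)
    rw [Real.log_div one_ne_zero h.ne', Real.log_one] at h'
    rw [abs_of_nonpos (mul_nonpos_of_nonneg_of_nonpos h0 hlog)]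
    have := mul_le_mul_of_nonneg_left h' h0
    have hxx : x * (1/x) = 1 := by field_simp
    nlinarith
  · have hlog0 : 0 ≤ Real.log x := Real.log_nonneg hx1.le
    have hlog : Real.log x ≤ x - 1 := Real.log_le_sub_one_of_pos h
    rw [abs_of_nonneg (mul_nonneg h0 hlog0)]
    nlinarith

theorem stmt_2 {Ω : Type*} [MeasurableSpace Ω] (P Q : Measure Ω)
    [IsProbabilityMeasure P] [IsProbabilityMeasure Q]
    (m : Measure Ω) (hm : m = (1 / 2 : ℝ≥0∞) • (P + Q)) :
    klDiv P m + klDiv Q m =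
      sSup {y : EReal | ∃ F : Ω → ℝ, Measurable F ∧ (∃ C : ℝ, ∀ x, |F x| ≤ C) ∧
        y = ((2 * Real.log 2 - ∫ x, Real.log (1 + Real.exp (-F x)) ∂P
          - ∫ x, Real.log (1 + Real.exp (F x)) ∂Q : ℝ) : EReal)} := by
  have hm_univ : m Set.univ = 1 := by
    rw [hm]
    simp [Measure.smul_apply, Measure.add_apply]
    exact ENNReal.inv_two_add_inv_two
  haveI : IsProbabilityMeasure m := ⟨hm_univ⟩
  have hPQ2 : P + Q = (2 : ℝ≥0∞) • m := by
    rw [hm, smul_smul]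
    rw [show (2 : ℝ≥0∞) * (1/2) = 1 by
      rw [one_div, ENNReal.mul_inv_cancel two_ne_zero ENNReal.ofNat_ne_top]]
    rw [one_smul]
  have hPm : P ≪ m := by
    refine Measure.absolutelyContinuous_of_le_smul (c := 2) ?_
    rw [← hPQ2]; exact Measure.le_add_right le_rfl
  have hQm : Q ≪ m := by
    refine Measure.absolutelyContinuous_of_le_smul (c := 2) ?_
    rw [← hPQ2]; exact Measure.le_add_left le_rfl
  have hpq : ∀ᵐ x ∂m, P.rnDeriv m x + Q.rnDeriv m x = 2 := by
    have h1 : (P + Q).rnDeriv m =ᵐ[m] P.rnDeriv m + Q.rnDeriv m := Measure.rnDeriv_add P Q m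
    have h2 : ((2 : ℝ≥0∞) • m).rnDeriv m =ᵐ[m] (2 : ℝ≥0∞) • m.rnDeriv m :=
      Measure.rnDeriv_smul_left_of_ne_top m m ENNReal.ofNat_ne_top
    have h3 : m.rnDeriv m =ᵐ[m] fun _ => 1 := Measure.rnDeriv_self m
    rw [hPQ2] at h1
    filter_upwards [h1, h2, h3] with x hx1 hx2 hx3
    have hx2' : ((2 : ℝ≥0∞) • m).rnDeriv m x = 2 * m.rnDeriv m x := by
      simpa [smul_eq_mul] using hx2
    have : P.rnDeriv m x + Q.rnDeriv m x = (P.rnDeriv m + Q.rnDeriv m) x := rfl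
    rw [this, ← hx1, hx2', hx3, mul_one]
  set p : Ω → ℝ := fun x => min ((P.rnDeriv m x).toReal) 2 with hp_def
  set q : Ω → ℝ := fun x => min ((Q.rnDeriv m x).toReal) 2 with hq_def
  have hp0 : ∀ x, 0 ≤ p x := fun x => le_min ENNReal.toReal_nonneg (by norm_num)
  have hq0 : ∀ x, 0 ≤ q x := fun x => le_min ENNReal.toReal_nonneg (by norm_num)
  have hp2 : ∀ x, p x ≤ 2 := fun x => min_le_right _ _
  have hq2 : ∀ x, q x ≤ 2 := fun x => min_le_right _ _
  have hpmeas : Measurable p := (Measure.measurable_rnDeriv P m).ennreal_toReal.min measurable_const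
  have hqmeas : Measurable q := (Measure.measurable_rnDeriv Q m).ennreal_toReal.min measurable_const
  have hp_ae : (fun x => (P.rnDeriv m x).toReal) =ᵐ[m] p := by
    filter_upwards [hpq] with x hx
    have hle : P.rnDeriv m x ≤ 2 := le_of_le_of_eq (self_le_add_right _ _) hx
    have : (P.rnDeriv m x).toReal ≤ 2 := by
      have := ENNReal.toReal_mono ENNReal.ofNat_ne_top hle
      simpa using this
    simp only [hp_def, min_eq_left this]
  have hq_ae : (fun x => (Q.rnDeriv m x).toReal) =ᵐ[m] q := by
    filter_upwards [hpq] with x hx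
    have hle : Q.rnDeriv m x ≤ 2 := le_of_le_of_eq (self_le_add_left _ _) hx
    have : (Q.rnDeriv m x).toReal ≤ 2 := by
      have := ENNReal.toReal_mono ENNReal.ofNat_ne_top hle
      simpa using this
    simp only [hq_def, min_eq_left this]
  have hpq' : ∀ᵐ x ∂m, p x + q x = 2 := by
    filter_upwards [hpq, Measure.rnDeriv_ne_top P m, Measure.rnDeriv_ne_top Q m, hp_ae, hq_ae]
      with x hx hP hQ hxp hxq
    rw [← hxp, ← hxq, ← ENNReal.toReal_add hP hQ, hx]
    simp
  have hppos : ∀ᵐ x ∂P, 0 < p x := by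
    filter_upwards [Measure.rnDeriv_pos hPm,
      (Measure.rnDeriv_ne_top P m).filter_mono hPm.ae_le,
      hp_ae.filter_mono hPm.ae_le] with x h1 h2 h3
    rw [← h3]; exact ENNReal.toReal_pos h1.ne' h2
  have hqpos : ∀ᵐ x ∂Q, 0 < q x := by
    filter_upwards [Measure.rnDeriv_pos hQm,
      (Measure.rnDeriv_ne_top Q m).filter_mono hQm.ae_le,
      hq_ae.filter_mono hQm.ae_le] with x h1 h2 h3
    rw [← h3]; exact ENNReal.toReal_pos h1.ne' h2
  -- integrability facts
  have hint_plogp : Integrable (fun x => p x * Real.log (p x)) m := by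
    refine (integrable_const (2:ℝ)).mono'
      ((hpmeas.mul (Real.measurable_log.comp hpmeas)).aestronglyMeasurable) ?_
    exact Filter.Eventually.of_forall fun x => by
      rw [Real.norm_eq_abs]; exact js_abs_mul_log_le (hp0 x) (hp2 x)
  have hint_qlogq : Integrable (fun x => q x * Real.log (q x)) m := by
    refine (integrable_const (2:ℝ)).mono'
      ((hqmeas.mul (Real.measurable_log.comp hqmeas)).aestronglyMeasurable) ?_
    exact Filter.Eventually.of_forall fun x => by
      rw [Real.norm_eq_abs]; exact js_abs_mul_log_le (hq0 x) (hq2 x)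
  have hint_logp_P : Integrable (fun x => Real.log (p x)) P := by
    rw [← integrable_rnDeriv_smul_iff hPm]
    refine hint_plogp.congr ?_
    filter_upwards [hp_ae] with x hx
    rw [smul_eq_mul, hx]
  have hint_logq_Q : Integrable (fun x => Real.log (q x)) Q := by
    rw [← integrable_rnDeriv_smul_iff hQm]
    refine hint_qlogq.congr ?_
    filter_upwards [hq_ae] with x hx
    rw [smul_eq_mul, hx]
  have hp_aeP : (fun x => (P.rnDeriv m x).toReal) =ᵐ[P] p := hp_ae.filter_mono hPm.ae_le
  have hq_aeQ : (fun x => (Q.rnDeriv m x).toReal) =ᵐ[Q] q := hq_ae.filter_mono hQm.ae_le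
  have klP : klDiv P m = ((∫ x, Real.log (p x) ∂P : ℝ) : EReal) := by
    rw [klDiv, if_pos]
    · norm_cast
      exact integral_congr_ae (hp_aeP.fun_comp Real.log)
    · exact ⟨hPm, hint_logp_P.congr (hp_aeP.fun_comp Real.log).symm⟩
  have klQ : klDiv Q m = ((∫ x, Real.log (q x) ∂Q : ℝ) : EReal) := by
    rw [klDiv, if_pos]
    · norm_cast
      exact integral_congr_ae (hq_aeQ.fun_comp Real.log)
    · exact ⟨hQm, hint_logq_Q.congr (hq_aeQ.fun_comp Real.log).symm⟩
  rw [klP, klQ, ← EReal.coe_add]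
  set IP := ∫ x, Real.log (p x) ∂P with hIP
  set IQ := ∫ x, Real.log (q x) ∂Q with hIQ
  have hPtrans : ∀ g : Ω → ℝ, ∫ x, g x ∂P = ∫ x, p x * g x ∂m := by
    intro g
    rw [← integral_rnDeriv_smul hPm]
    refine integral_congr_ae ?_
    filter_upwards [hp_ae] with x hx
    rw [smul_eq_mul, hx]
  have hQtrans : ∀ g : Ω → ℝ, ∫ x, g x ∂Q = ∫ x, q x * g x ∂m := by
    intro g
    rw [← integral_rnDeriv_smul hQm]
    refine integral_congr_ae ?_
    filter_upwards [hq_ae] with x hx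
    rw [smul_eq_mul, hx]
  have hintp1 : ∫ x, p x ∂m = 1 := by
    have h := hPtrans (fun _ => 1)
    simpa using h.symm
  have hintq1 : ∫ x, q x ∂m = 1 := by
    have h := hQtrans (fun _ => 1)
    simpa using h.symm
  have hintp : Integrable p m := by
    refine (integrable_const (2:ℝ)).mono' hpmeas.aestronglyMeasurable ?_
    exact Filter.Eventually.of_forall fun x => by
      rw [Real.norm_eq_abs, abs_of_nonneg (hp0 x)]; exact hp2 x
  have hintq : Integrable q m := by
    refine (integrable_const (2:ℝ)).mono' hqmeas.aestronglyMeasurable ?_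
    exact Filter.Eventually.of_forall fun x => by
      rw [Real.norm_eq_abs, abs_of_nonneg (hq0 x)]; exact hq2 x
  refine le_antisymm ?_ (sSup_le ?_)
  · -- lower bound : value ≤ sSup, via approximating sequence
    set ε : ℕ → ℝ := fun n => 1 / ((n : ℝ) + 1) with hε
    have hε0 : ∀ n, 0 < ε n := fun n => by positivity
    have hε1 : ∀ n, ε n ≤ 1 := fun n => by
      rw [hε]
      rw [div_le_one (by positivity)]
      simp
    have hεtend : Filter.Tendsto ε Filter.atTop (nhds 0) :=
      tendsto_one_div_add_atTop_nhds_zero_nat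
    set G : ℕ → Ω → ℝ := fun n x => Real.log ((p x + ε n) / (q x + ε n)) with hG
    have hGmeas : ∀ n, Measurable (G n) := fun n =>
      Real.measurable_log.comp ((hpmeas.add measurable_const).div (hqmeas.add measurable_const))
    have hGbd : ∀ n, ∀ x, |G n x| ≤ Real.log ((2 + ε n) / ε n) := by
      intro n x
      have h1 : (0:ℝ) < p x + ε n := by have := hp0 x; have := hε0 n; linarith
      have h2 : (0:ℝ) < q x + ε n := by have := hq0 x; have := hε0 n; linarith
      rw [abs_le]
      constructor
      · rw [show -Real.log ((2 + ε n) / ε n) = Real.log (ε n / (2 + ε n)) by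
          rw [← Real.log_inv, inv_div]]
        refine Real.log_le_log (by have := hε0 n; positivity) ?_
        exact div_le_div₀ h1.le (by have := hp0 x; linarith [hε0 n]) h2 (by linarith [hq2 x])
      · refine Real.log_le_log (by positivity) ?_
        exact div_le_div₀ (by linarith [hε0 n]) (by linarith [hp2 x]) (hε0 n) (by linarith [hq0 x])
    have hA : ∀ n, (fun x => Real.log (1 + Real.exp (-G n x))) =ᵐ[P]
        (fun x => Real.log (2 + 2 * ε n) - Real.log (p x + ε n)) := by
      intro n
      filter_upwards [hpq'.filter_mono hPm.ae_le] with x hx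
      have h1 : (0:ℝ) < p x + ε n := by have := hp0 x; have := hε0 n; linarith
      have h2 : (0:ℝ) < q x + ε n := by have := hq0 x; have := hε0 n; linarith
      have hrpos : 0 < (p x + ε n) / (q x + ε n) := by positivity
      show Real.log (1 + Real.exp (-Real.log ((p x + ε n) / (q x + ε n)))) = _
      rw [Real.exp_neg, Real.exp_log hrpos]
      rw [show (1 : ℝ) + ((p x + ε n) / (q x + ε n))⁻¹ = (2 + 2 * ε n) / (p x + ε n) by
        rw [inv_div]; field_simp; linarith]
      exact Real.log_div (by positivity) h1.ne'
    have hB : ∀ n, (fun x => Real.log (1 + Real.exp (G n x))) =ᵐ[Q]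
        (fun x => Real.log (2 + 2 * ε n) - Real.log (q x + ε n)) := by
      intro n
      filter_upwards [hpq'.filter_mono hQm.ae_le] with x hx
      have h1 : (0:ℝ) < p x + ε n := by have := hp0 x; have := hε0 n; linarith
      have h2 : (0:ℝ) < q x + ε n := by have := hq0 x; have := hε0 n; linarith
      have hrpos : 0 < (p x + ε n) / (q x + ε n) := by positivity
      show Real.log (1 + Real.exp (Real.log ((p x + ε n) / (q x + ε n)))) = _
      rw [Real.exp_log hrpos]
      rw [show (1 : ℝ) + (p x + ε n) / (q x + ε n) = (2 + 2 * ε n) / (q x + ε n) by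
        field_simp; linarith]
      exact Real.log_div (by positivity) h2.ne'
    have hintPn : ∀ n, Integrable (fun x => Real.log (p x + ε n)) P := by
      intro n
      refine (integrable_const (|Real.log (ε n)| + Real.log 3)).mono'
        (Real.measurable_log.comp (hpmeas.add measurable_const)).aestronglyMeasurable ?_
      refine Filter.Eventually.of_forall fun x => ?_
      have h1 : (0:ℝ) < p x + ε n := by have := hp0 x; have := hε0 n; linarith
      have hlo : Real.log (ε n) ≤ Real.log (p x + ε n) :=
        Real.log_le_log (hε0 n) (by linarith [hp0 x])
      have hhi : Real.log (p x + ε n) ≤ Real.log 3 :=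
        Real.log_le_log h1 (by linarith [hp2 x, hε1 n])
      have h3 : 0 ≤ Real.log 3 := Real.log_nonneg (by norm_num)
      rw [Real.norm_eq_abs, abs_le]
      constructor
      · have := neg_abs_le (Real.log (ε n)); linarith
      · linarith [abs_nonneg (Real.log (ε n))]
    have hintQn : ∀ n, Integrable (fun x => Real.log (q x + ε n)) Q := by
      intro n
      refine (integrable_const (|Real.log (ε n)| + Real.log 3)).mono'
        (Real.measurable_log.comp (hqmeas.add measurable_const)).aestronglyMeasurable ?_
      refine Filter.Eventually.of_forall fun x => ?_
      have h1 : (0:ℝ) < q x + ε n := by have := hq0 x; have := hε0 n; linarith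
      have hlo : Real.log (ε n) ≤ Real.log (q x + ε n) :=
        Real.log_le_log (hε0 n) (by linarith [hq0 x])
      have hhi : Real.log (q x + ε n) ≤ Real.log 3 :=
        Real.log_le_log h1 (by linarith [hq2 x, hε1 n])
      have h3 : 0 ≤ Real.log 3 := Real.log_nonneg (by norm_num)
      rw [Real.norm_eq_abs, abs_le]
      constructor
      · have := neg_abs_le (Real.log (ε n)); linarith
      · linarith [abs_nonneg (Real.log (ε n))]
    have hAint : ∀ n, ∫ x, Real.log (1 + Real.exp (-G n x)) ∂P
        = Real.log (2 + 2 * ε n) - ∫ x, Real.log (p x + ε n) ∂P := by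
      intro n
      rw [integral_congr_ae (hA n), integral_sub (integrable_const _) (hintPn n),
        integral_const]
      simp
    have hBint : ∀ n, ∫ x, Real.log (1 + Real.exp (G n x)) ∂Q
        = Real.log (2 + 2 * ε n) - ∫ x, Real.log (q x + ε n) ∂Q := by
      intro n
      rw [integral_congr_ae (hB n), integral_sub (integrable_const _) (hintQn n),
        integral_const]
      simp
    have htendP : Filter.Tendsto (fun n => ∫ x, Real.log (p x + ε n) ∂P) Filter.atTop
        (nhds IP) := by
      rw [hIP]
      refine tendsto_integral_of_dominated_convergence
        (fun x => |Real.log (p x)| + Real.log 3)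
        (fun n => (Real.measurable_log.comp (hpmeas.add measurable_const)).aestronglyMeasurable)
        (hint_logp_P.abs.add (integrable_const _)) ?_ ?_
      · intro n
        filter_upwards [hppos] with x hx
        have h1 : Real.log (p x) ≤ Real.log (p x + ε n) :=
          Real.log_le_log hx (by linarith [hε0 n])
        have h2 : Real.log (p x + ε n) ≤ Real.log 3 :=
          Real.log_le_log (by linarith [hε0 n]) (by linarith [hp2 x, hε1 n])
        have h3 : 0 ≤ Real.log 3 := Real.log_nonneg (by norm_num)
        rw [Real.norm_eq_abs, abs_le]
        constructor
        · have := neg_abs_le (Real.log (p x)); linarith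
        · linarith [abs_nonneg (Real.log (p x))]
      · filter_upwards [hppos] with x hx
        have h1 : Filter.Tendsto (fun n => p x + ε n) Filter.atTop (nhds (p x + 0)) :=
          tendsto_const_nhds.add hεtend
        rw [add_zero] at h1
        exact ((Real.continuousAt_log hx.ne').tendsto).comp h1
    have htendQ : Filter.Tendsto (fun n => ∫ x, Real.log (q x + ε n) ∂Q) Filter.atTop
        (nhds IQ) := by
      rw [hIQ]
      refine tendsto_integral_of_dominated_convergence
        (fun x => |Real.log (q x)| + Real.log 3)
        (fun n => (Real.measurable_log.comp (hqmeas.add measurable_const)).aestronglyMeasurable)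
        (hint_logq_Q.abs.add (integrable_const _)) ?_ ?_
      · intro n
        filter_upwards [hqpos] with x hx
        have h1 : Real.log (q x) ≤ Real.log (q x + ε n) :=
          Real.log_le_log hx (by linarith [hε0 n])
        have h2 : Real.log (q x + ε n) ≤ Real.log 3 :=
          Real.log_le_log (by linarith [hε0 n]) (by linarith [hq2 x, hε1 n])
        have h3 : 0 ≤ Real.log 3 := Real.log_nonneg (by norm_num)
        rw [Real.norm_eq_abs, abs_le]
        constructor
        · have := neg_abs_le (Real.log (q x)); linarith
        · linarith [abs_nonneg (Real.log (q x))]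
      · filter_upwards [hqpos] with x hx
        have h1 : Filter.Tendsto (fun n => q x + ε n) Filter.atTop (nhds (q x + 0)) :=
          tendsto_const_nhds.add hεtend
        rw [add_zero] at h1
        exact ((Real.continuousAt_log hx.ne').tendsto).comp h1
    have htend2 : Filter.Tendsto (fun n => Real.log (2 + 2 * ε n)) Filter.atTop
        (nhds (Real.log 2)) := by
      have h1 : Filter.Tendsto (fun n => 2 + 2 * ε n) Filter.atTop (nhds (2 + 2 * 0)) :=
        tendsto_const_nhds.add (hεtend.const_mul 2)
      rw [show (2 : ℝ) + 2 * 0 = 2 by ring] at h1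
      exact ((Real.continuousAt_log (by norm_num)).tendsto).comp h1
    set v : ℕ → ℝ := fun n => 2 * Real.log 2 - ∫ x, Real.log (1 + Real.exp (-G n x)) ∂P
        - ∫ x, Real.log (1 + Real.exp (G n x)) ∂Q with hv_def
    have hv : Filter.Tendsto v Filter.atTop (nhds (IP + IQ)) := by
      have hveq : v = fun n => 2 * Real.log 2
          - (Real.log (2 + 2 * ε n) - ∫ x, Real.log (p x + ε n) ∂P)
          - (Real.log (2 + 2 * ε n) - ∫ x, Real.log (q x + ε n) ∂Q) := by
        funext n
        rw [hv_def]
        simp only [hAint n, hBint n]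
      rw [hveq]
      have : Filter.Tendsto (fun n => 2 * Real.log 2
          - (Real.log (2 + 2 * ε n) - ∫ x, Real.log (p x + ε n) ∂P)
          - (Real.log (2 + 2 * ε n) - ∫ x, Real.log (q x + ε n) ∂Q)) Filter.atTop
          (nhds (2 * Real.log 2 - (Real.log 2 - IP) - (Real.log 2 - IQ))) :=
        (tendsto_const_nhds.sub (htend2.sub htendP)).sub (htend2.sub htendQ)
      rw [show 2 * Real.log 2 - (Real.log 2 - IP) - (Real.log 2 - IQ) = IP + IQ by ring] at this
      exact this
    refine le_of_tendsto (EReal.tendsto_coe.mpr hv) ?_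
    refine Filter.Eventually.of_forall fun n => le_sSup ?_
    exact ⟨G n, hGmeas n, ⟨Real.log ((2 + ε n) / ε n), hGbd n⟩, rfl⟩
  · -- upper bound: every element of the set is ≤ value
    rintro y ⟨F, hFmeas, ⟨C, hC⟩, rfl⟩
    rw [EReal.coe_le_coe_iff]
    set g₁ : Ω → ℝ := fun x => Real.log (1 + Real.exp (-F x)) with hg1
    set g₂ : Ω → ℝ := fun x => Real.log (1 + Real.exp (F x)) with hg2
    have hg1meas : Measurable g₁ :=
      Real.measurable_log.comp (measurable_const.add (Real.measurable_exp.comp hFmeas.neg))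
    have hg2meas : Measurable g₂ :=
      Real.measurable_log.comp (measurable_const.add (Real.measurable_exp.comp hFmeas))
    have hg1bd : ∀ x, |g₁ x| ≤ Real.log (1 + Real.exp C) := by
      intro x
      have he : Real.exp (-F x) ≤ Real.exp C := Real.exp_le_exp.mpr (le_trans (neg_le_abs _) (hC x))
      have h0 : (0:ℝ) < 1 + Real.exp (-F x) := by positivity
      rw [abs_of_nonneg (Real.log_nonneg (by nlinarith [Real.exp_pos (-F x)]))]
      exact Real.log_le_log h0 (by linarith)
    have hg2bd : ∀ x, |g₂ x| ≤ Real.log (1 + Real.exp C) := by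
      intro x
      have he : Real.exp (F x) ≤ Real.exp C := Real.exp_le_exp.mpr (le_trans (le_abs_self _) (hC x))
      have h0 : (0:ℝ) < 1 + Real.exp (F x) := by positivity
      rw [abs_of_nonneg (Real.log_nonneg (by nlinarith [Real.exp_pos (F x)]))]
      exact Real.log_le_log h0 (by linarith)
    -- integrability of products
    have hbdd_int : ∀ (w h : Ω → ℝ), Measurable w → Measurable h → (∀ x, 0 ≤ w x) →
        (∀ x, w x ≤ 2) → ∀ D : ℝ, (∀ x, |h x| ≤ D) → Integrable (fun x => w x * h x) m := by
      intro w h hw hh hw0 hw2 D hD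
      refine (integrable_const (2 * D)).mono' ((hw.mul hh).aestronglyMeasurable) ?_
      refine Filter.Eventually.of_forall fun x => ?_
      rw [Real.norm_eq_abs, abs_mul, abs_of_nonneg (hw0 x)]
      have h1 : |h x| ≤ D := hD x
      have h2 : 0 ≤ |h x| := abs_nonneg _
      nlinarith [hw2 x, hw0 x]
    have i1 : Integrable (fun x => p x * (Real.log 2 - g₁ x)) m :=
      hbdd_int p _ hpmeas (measurable_const.sub hg1meas) hp0 hp2
        (|Real.log 2| + Real.log (1 + Real.exp C))
        (fun x => by
          have := hg1bd x
          have h2 : 0 ≤ Real.log (1 + Real.exp C) := by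
            refine Real.log_nonneg ?_
            have := Real.exp_pos C
            linarith
          calc |Real.log 2 - g₁ x| ≤ |Real.log 2| + |g₁ x| := abs_sub _ _
            _ ≤ |Real.log 2| + Real.log (1 + Real.exp C) := by linarith)
    have i2 : Integrable (fun x => q x * (Real.log 2 - g₂ x)) m :=
      hbdd_int q _ hqmeas (measurable_const.sub hg2meas) hq0 hq2
        (|Real.log 2| + Real.log (1 + Real.exp C))
        (fun x => by
          have := hg2bd x
          have h2 : 0 ≤ Real.log (1 + Real.exp C) := by
            refine Real.log_nonneg ?_
            have := Real.exp_pos C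
            linarith
          calc |Real.log 2 - g₂ x| ≤ |Real.log 2| + |g₂ x| := abs_sub _ _
            _ ≤ |Real.log 2| + Real.log (1 + Real.exp C) := by linarith)
    have ip1 : Integrable (fun x => p x * g₁ x) m :=
      hbdd_int p g₁ hpmeas hg1meas hp0 hp2 _ hg1bd
    have iq2 : Integrable (fun x => q x * g₂ x) m :=
      hbdd_int q g₂ hqmeas hg2meas hq0 hq2 _ hg2bd
    have key : ∫ x, (p x * (Real.log 2 - g₁ x) + q x * (Real.log 2 - g₂ x)) ∂m
        ≤ ∫ x, (p x * Real.log (p x) + q x * Real.log (q x)) ∂m := by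
      refine integral_mono_ae (i1.add i2) (hint_plogp.add hint_qlogq) ?_
      filter_upwards [hpq'] with x hx
      exact js_pointwise (p x) (q x) (F x) (hp0 x) (hq0 x) hx
    have expandL : ∫ x, (p x * (Real.log 2 - g₁ x) + q x * (Real.log 2 - g₂ x)) ∂m
        = 2 * Real.log 2 - (∫ x, g₁ x ∂P) - (∫ x, g₂ x ∂Q) := by
      rw [integral_add i1 i2]
      have e1 : ∫ x, p x * (Real.log 2 - g₁ x) ∂m = Real.log 2 - ∫ x, g₁ x ∂P := by
        have : (fun x => p x * (Real.log 2 - g₁ x))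
            = fun x => Real.log 2 * p x - p x * g₁ x := by funext x; ring
        rw [this, integral_sub (hintp.const_mul _) ip1, integral_const_mul, hintp1,
          hPtrans g₁]
        ring
      have e2 : ∫ x, q x * (Real.log 2 - g₂ x) ∂m = Real.log 2 - ∫ x, g₂ x ∂Q := by
        have : (fun x => q x * (Real.log 2 - g₂ x))
            = fun x => Real.log 2 * q x - q x * g₂ x := by funext x; ring
        rw [this, integral_sub (hintq.const_mul _) iq2, integral_const_mul, hintq1,
          hQtrans g₂]
        ring
      rw [e1, e2]; ring
    have expandR : ∫ x, (p x * Real.log (p x) + q x * Real.log (q x)) ∂m = IP + IQ := by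
      rw [integral_add hint_plogp hint_qlogq, hIP, hIQ,
        hPtrans (fun x => Real.log (p x)), hQtrans (fun x => Real.log (q x))]
    rw [expandL, expandR] at key
    linarith
end

section
/- Let t be a real number with t < log 2, and define f : (0, ∞) → ℝ by f(u) = u·log u − (u + 1)·log((u + 1)/2). Then −log(2 − exp(t)) is the greatest element of the set { u·t − f(u) : u ∈ (0, ∞) }, and it is attained at u = exp(t)/(2 − exp(t)). -/
theorem stmt_5 (t : ℝ) (ht : t < Real.log 2)
    (f : ℝ → ℝ)
    (hf : ∀ u ∈ Set.Ioi (0 : ℝ),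
      f u = u * Real.log u - (u + 1) * Real.log ((u + 1) / 2)) :
    IsGreatest {y : ℝ | ∃ u ∈ Set.Ioi (0 : ℝ), y = u * t - f u}
        (-Real.log (2 - Real.exp t)) ∧
      (Real.exp t / (2 - Real.exp t)) * t - f (Real.exp t / (2 - Real.exp t)) =
        -Real.log (2 - Real.exp t) := by
  set e := Real.exp t with hedef
  have he : 0 < e := Real.exp_pos t
  have he2 : e < 2 := by
    have := Real.exp_lt_exp.mpr ht
    rwa [Real.exp_log (by norm_num)] at this
  have h2e : (0:ℝ) < 2 - e := by linarith
  have hu0 : (0:ℝ) < e / (2 - e) := by positivity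
  have hlogu0 : Real.log (e / (2 - e)) = t - Real.log (2 - e) := by
    rw [Real.log_div he.ne' h2e.ne', Real.log_exp]
  have hlogs : Real.log ((e / (2 - e) + 1) / 2) = -Real.log (2 - e) := by
    have : (e / (2 - e) + 1) / 2 = (2 - e)⁻¹ := by field_simp; ring
    rw [this, Real.log_inv]
  have heq : (e / (2 - e)) * t - f (e / (2 - e)) = -Real.log (2 - e) := by
    rw [hf _ hu0, hlogu0, hlogs]; ring
  refine ⟨⟨⟨e / (2 - e), hu0, heq.symm⟩, ?_⟩, heq⟩
  rintro y ⟨u, hu, rfl⟩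
  have hu' : (0:ℝ) < u := hu
  rw [hf u hu]
  have h1 : Real.log (e * (u + 1) / (2 * u)) =
      t + Real.log (u + 1) - Real.log 2 - Real.log u := by
    rw [Real.log_div (by positivity) (by positivity),
      Real.log_mul he.ne' (by positivity),
      Real.log_mul (by norm_num) hu'.ne', Real.log_exp]
    ring
  have h2 : Real.log ((u + 1) * (2 - e) / 2) =
      Real.log (u + 1) + Real.log (2 - e) - Real.log 2 := by
    rw [Real.log_div (by positivity) (by norm_num),
      Real.log_mul (by positivity) h2e.ne']
  have h3 : Real.log ((u + 1) / 2) = Real.log (u + 1) - Real.log 2 := by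
    rw [Real.log_div (by positivity) (by norm_num)]
  have hA := Real.log_le_sub_one_of_pos (show (0:ℝ) < e * (u + 1) / (2 * u) by positivity)
  rw [h1] at hA
  have hA' : u * (t + Real.log (u + 1) - Real.log 2 - Real.log u) ≤ e * (u + 1) / 2 - u := by
    have h := mul_le_mul_of_nonneg_left hA hu'.le
    have hkey : u * (e * (u + 1) / (2 * u) - 1) = e * (u + 1) / 2 - u := by
      field_simp
    linarith [hkey ▸ h]
  have hB := Real.log_le_sub_one_of_pos (show (0:ℝ) < (u + 1) * (2 - e) / 2 by positivity)
  rw [h2] at hB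
  rw [h3]
  nlinarith [hA', hB]
end
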